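/- Let d ≥ 1 and let Σ be a symmetric positive definite d×d real matrix, and let U be a standard Gaussian random vector N(0, Id_d). Then the total variation distance satisfies ‖N(0, Id) − N(0, Σ)‖_TV ≤ P(‖Σ^{1/2}U‖² − ‖U‖² ≥ log det(Σ)) − P(‖U‖² − ‖Σ^{−1/2}U‖² ≥ log det(Σ)). -/

import Mathlib

/-!
Let `p`, `q` be the densities of `P = N(0, Id)` and `Q = N(0, Σ)`. Comparing exponents, `p ≤ q`
holds exactly on `B = {x | log det Σ ≤ ‖x‖² - ‖Σ^{-1/2} x‖²}`, and splitting `A` along `B` (Scheffé)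
bounds `|P(A) - Q(A)|` by `Q(B) - P(B)`. Since `N(0, Σ)` is the image of `N(0, Id)` under
`x ↦ Σ^{1/2} x`, `Q(B) = P({x | log det Σ ≤ ‖Σ^{1/2} x‖² - ‖x‖²})`.
-/

open MeasureTheory Real Matrix

noncomputable def gaussCov (d : ℕ) (S : Matrix (Fin d) (Fin d) ℝ) : Measure (Fin d → ℝ) :=
  volume.withDensity fun x =>
    ENNReal.ofReal ((2 * π) ^ (-(d : ℝ) / 2) * S.det ^ (-(1 : ℝ) / 2)
      * Real.exp (-(∑ i, x i * (S⁻¹ *ᵥ x) i) / 2))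

noncomputable def Matrix.PosSemidef.sqrt {n : Type*} [Fintype n] [DecidableEq n]
    {A : Matrix n n ℝ} (hA : A.PosSemidef) : Matrix n n ℝ :=
  (hA.1.eigenvectorUnitary : Matrix n n ℝ) * diagonal ((↑) ∘ (Real.sqrt ∘ hA.1.eigenvalues)) *
    (star hA.1.eigenvectorUnitary : Matrix n n ℝ)

section MatrixSqrt
open scoped MatrixOrder
variable {n : Type*} [Fintype n] [DecidableEq n] {A : Matrix n n ℝ} (hA : A.PosSemidef)

lemma Matrix.PosSemidef.sqrt_eq_cfcSqrt : hA.sqrt = CFC.sqrt A := by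
  rw [CFC.sqrt_eq_real_sqrt A hA.nonneg, cfcₙ_eq_cfc, hA.1.cfc_eq]
  simp only [sqrt, IsHermitian.cfc, RCLike.ofReal_real_eq_id, CompTriple.comp_eq,
    Unitary.conjStarAlgAut_apply]
  rfl

lemma Matrix.PosSemidef.sqrt_mul_self : hA.sqrt * hA.sqrt = A := by
  rw [hA.sqrt_eq_cfcSqrt]
  exact CFC.sqrt_mul_sqrt_self A hA.nonneg

lemma Matrix.PosSemidef.transpose_sqrt : hA.sqrtᵀ = hA.sqrt := by
  rw [← conjTranspose_eq_transpose_of_trivial, hA.sqrt_eq_cfcSqrt]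
  exact (CFC.sqrt_nonneg A).posSemidef.isHermitian.eq

lemma Matrix.PosSemidef.sqrt_mul_transpose_sqrt : hA.sqrt * hA.sqrtᵀ = A := by
  rw [hA.transpose_sqrt, hA.sqrt_mul_self]

lemma Matrix.PosSemidef.transpose_sqrt_mul_sqrt : hA.sqrtᵀ * hA.sqrt = A := by
  rw [hA.transpose_sqrt, hA.sqrt_mul_self]

lemma Matrix.PosDef.isUnit_det_sqrt (hA : A.PosDef) : IsUnit hA.posSemidef.sqrt.det := by
  have hdet := hA.det_pos
  rw [← hA.posSemidef.sqrt_mul_self, det_mul] at hdet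
  exact isUnit_iff_ne_zero.mpr (left_ne_zero_of_mul hdet.ne')

end MatrixSqrt

section DotProduct
variable {n : Type*} [Fintype n]

lemma sum_sq_eq_dotProduct_self (x : n → ℝ) : ∑ i, x i ^ 2 = x ⬝ᵥ x := by
  simp only [dotProduct, sq]

lemma Matrix.mulVec_dotProduct_mulVec (A B : Matrix n n ℝ) (x y : n → ℝ) :
    (A *ᵥ x) ⬝ᵥ (B *ᵥ y) = x ⬝ᵥ ((Aᵀ * B) *ᵥ y) := by
  rw [← vecMul_transpose, ← dotProduct_mulVec, mulVec_mulVec]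

lemma Matrix.mulVec_dotProduct_inv_mul_transpose_mulVec [DecidableEq n] {T : Matrix n n ℝ}
    (hT : IsUnit T.det) (x : n → ℝ) : (T *ᵥ x) ⬝ᵥ ((T * Tᵀ)⁻¹ *ᵥ (T *ᵥ x)) = x ⬝ᵥ x := by
  have hTt : IsUnit Tᵀ.det := by rwa [det_transpose]
  rw [mulVec_mulVec, mulVec_dotProduct_mulVec, Matrix.mul_inv_rev, ← mul_assoc, ← mul_assoc,
    mul_nonsing_inv _ hTt, one_mul, nonsing_inv_mul _ hT, one_mulVec]

end DotProduct

section Scheffe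
variable {α : Type*} [MeasurableSpace α] {μ ν : Measure α} [IsFiniteMeasure μ]
  [IsFiniteMeasure ν] {A B : Set α}

lemma MeasureTheory.measureReal_sub_le_of_restrict_le (hA : MeasurableSet A)
    (hB : MeasurableSet B) (hμν : μ.restrict B ≤ ν.restrict B)
    (hνμ : ν.restrict Bᶜ ≤ μ.restrict Bᶜ) :
    ν.real A - μ.real A ≤ ν.real B - μ.real B := by
  have hA_out : ν.real (A \ B) ≤ μ.real (A \ B) := by
    have h := hνμ A
    rw [Measure.restrict_apply hA, Measure.restrict_apply hA, ← Set.sdiff_eq] at h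
    exact ENNReal.toReal_mono (measure_ne_top _ _) h
  have hB_out : μ.real (B \ A) ≤ ν.real (B \ A) := by
    have h := hμν Aᶜ
    rw [Measure.restrict_apply hA.compl, Measure.restrict_apply hA.compl,
      ← Set.sdiff_eq_compl_inter] at h
    exact ENNReal.toReal_mono (measure_ne_top _ _) h
  have hμA := measureReal_inter_add_sdiff (μ := μ) (s := A) hB
  have hνA := measureReal_inter_add_sdiff (μ := ν) (s := A) hB
  have hμB := measureReal_inter_add_sdiff (μ := μ) (s := B) hA
  have hνB := measureReal_inter_add_sdiff (μ := ν) (s := B) hA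
  rw [Set.inter_comm] at hμB hνB
  linarith

lemma MeasureTheory.abs_measureReal_sub_le_of_restrict_le (huniv : μ Set.univ = ν Set.univ)
    (hA : MeasurableSet A) (hB : MeasurableSet B) (hμν : μ.restrict B ≤ ν.restrict B)
    (hνμ : ν.restrict Bᶜ ≤ μ.restrict Bᶜ) :
    |μ.real A - ν.real A| ≤ ν.real B - μ.real B := by
  have hcompl := measureReal_sub_le_of_restrict_le hA.compl hB hμν hνμ
  have huniv_real : μ.real Set.univ = ν.real Set.univ := congrArg ENNReal.toReal huniv
  rw [measureReal_compl hA, measureReal_compl hA, huniv_real] at hcompl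
  rw [abs_sub_le_iff]
  exact ⟨by linarith, measureReal_sub_le_of_restrict_le hA hB hμν hνμ⟩

end Scheffe

section WithDensity
variable {α β : Type*} [MeasurableSpace α] [MeasurableSpace β] {μ : Measure α}

lemma MeasureTheory.restrict_withDensity_le_of_le {f g : α → ENNReal} {B : Set α}
    (hB : MeasurableSet B) (hfg : ∀ x ∈ B, f x ≤ g x) :
    (μ.withDensity f).restrict B ≤ (μ.withDensity g).restrict B := by
  rw [restrict_withDensity hB, restrict_withDensity hB]
  exact withDensity_mono (ae_restrict_of_forall_mem hB hfg)

lemma MeasureTheory.map_withDensity_comp {φ : α → β} {g : β → ENNReal} (hφ : Measurable φ)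
    (hg : Measurable g) : (μ.withDensity (g ∘ φ)).map φ = (μ.map φ).withDensity g := by
  ext C hC
  rw [Measure.map_apply hφ hC, withDensity_apply _ hC, withDensity_apply _ (hφ hC),
    setLIntegral_map hC hg hφ, Function.comp_def]

end WithDensity

noncomputable def gaussDensity (d : ℕ) (S : Matrix (Fin d) (Fin d) ℝ) (x : Fin d → ℝ) : ℝ :=
  (2 * π) ^ (-(d : ℝ) / 2) * S.det ^ (-(1 : ℝ) / 2) * Real.exp (-(x ⬝ᵥ (S⁻¹ *ᵥ x)) / 2)

section Gaussian
variable {d : ℕ}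

lemma gaussCov_eq_withDensity (S : Matrix (Fin d) (Fin d) ℝ) :
    gaussCov d S = volume.withDensity fun x => ENNReal.ofReal (gaussDensity d S x) := rfl

lemma measurable_gaussDensity (S : Matrix (Fin d) (Fin d) ℝ) :
    Measurable (gaussDensity d S) := by
  unfold gaussDensity
  fun_prop

lemma gaussDensity_one (x : Fin d → ℝ) :
    gaussDensity d 1 x = (2 * π) ^ (-(d : ℝ) / 2) * Real.exp (-(x ⬝ᵥ x) / 2) := by
  simp only [gaussDensity, inv_one, one_mulVec, det_one, one_rpow, mul_one]

lemma integrable_gaussDensity_one : Integrable (gaussDensity d 1) := by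
  have hprod (x : Fin d → ℝ) : Real.exp (-(x ⬝ᵥ x) / 2) = ∏ i, Real.exp (-x i ^ 2 / 2) := by
    simp only [← Real.exp_sum, dotProduct, ← sq, ← Finset.sum_div, ← Finset.sum_neg_distrib]
  simp_rw [funext gaussDensity_one, hprod]
  refine Integrable.const_mul (Integrable.fintype_prod
    (f := fun _ t => Real.exp (-t ^ 2 / 2)) fun _ => ?_) _
  simpa [neg_div, div_eq_inv_mul] using integrable_exp_neg_mul_sq (b := 1 / 2) (by norm_num)

instance : IsFiniteMeasure (gaussCov d 1) :=
  isFiniteMeasure_withDensity_ofReal integrable_gaussDensity_one.hasFiniteIntegral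

lemma gaussDensity_one_eq_abs_det_mul {T : Matrix (Fin d) (Fin d) ℝ} (hT : IsUnit T.det)
    (x : Fin d → ℝ) :
    gaussDensity d 1 x = |T.det| * gaussDensity d (T * Tᵀ) (T *ᵥ x) := by
  have hdet : (T * Tᵀ).det ^ (-(1 : ℝ) / 2) = |T.det|⁻¹ := by
    rw [det_mul, det_transpose, ← sq, ← sq_abs, ← Real.rpow_natCast,
      ← Real.rpow_mul (abs_nonneg _)]
    norm_num [Real.rpow_neg_one]
  have hT0 : |T.det| ≠ 0 := abs_ne_zero.mpr hT.ne_zero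
  simp only [gaussDensity, hdet, mulVec_dotProduct_inv_mul_transpose_mulVec hT, inv_one,
    one_mulVec, det_one, one_rpow, mul_one]
  field_simp

lemma map_mulVec_gaussCov_one {T : Matrix (Fin d) (Fin d) ℝ} (hT : IsUnit T.det) :
    (gaussCov d 1).map (T *ᵥ ·) = gaussCov d (T * Tᵀ) := by
  have hTmeas : Measurable (T *ᵥ · : (Fin d → ℝ) → Fin d → ℝ) := by fun_prop
  have hg : Measurable fun y => ENNReal.ofReal (gaussDensity d (T * Tᵀ) y) :=
    (measurable_gaussDensity _).ennreal_ofReal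
  have hvol : volume.map (T *ᵥ ·) = ENNReal.ofReal |T.det|⁻¹ • volume := by
    rw [← abs_inv, ← Real.map_matrix_volume_pi_eq_smul_volume_pi hT.ne_zero]
    rfl
  have hdens : (fun x => ENNReal.ofReal (gaussDensity d 1 x)) = ENNReal.ofReal |T.det| •
      ((fun y => ENNReal.ofReal (gaussDensity d (T * Tᵀ) y)) ∘ (T *ᵥ ·)) := by
    ext x
    simp [gaussDensity_one_eq_abs_det_mul hT x, ENNReal.ofReal_mul (abs_nonneg _)]
  rw [gaussCov_eq_withDensity, hdens, withDensity_smul _ (hg.comp hTmeas), Measure.map_smul,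
    map_withDensity_comp hTmeas hg, hvol, withDensity_smul_measure, smul_smul,
    ← ENNReal.ofReal_mul (abs_nonneg _), mul_inv_cancel₀ (abs_ne_zero.mpr hT.ne_zero),
    ENNReal.ofReal_one, one_smul, gaussCov_eq_withDensity]

lemma map_sqrt_mulVec_gaussCov_one {S : Matrix (Fin d) (Fin d) ℝ} (hS : S.PosDef) :
    (gaussCov d 1).map (hS.posSemidef.sqrt *ᵥ ·) = gaussCov d S := by
  conv_rhs => rw [← hS.posSemidef.sqrt_mul_transpose_sqrt]
  exact map_mulVec_gaussCov_one hS.isUnit_det_sqrt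

lemma gaussDensity_one_le_iff {S R : Matrix (Fin d) (Fin d) ℝ} (hS : S.PosDef)
    (hR : Rᵀ * R = S⁻¹) (x : Fin d → ℝ) :
    gaussDensity d 1 x ≤ gaussDensity d S x ↔
      Real.log S.det ≤ ∑ i, x i ^ 2 - ∑ i, (R *ᵥ x) i ^ 2 := by
  have hdet : S.det ^ (-(1 : ℝ) / 2) = Real.exp (Real.log S.det * (-(1 : ℝ) / 2)) :=
    Real.rpow_def_of_pos hS.det_pos _
  rw [sum_sq_eq_dotProduct_self, sum_sq_eq_dotProduct_self, mulVec_dotProduct_mulVec, hR,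
    gaussDensity_one, gaussDensity, hdet, mul_assoc, mul_le_mul_iff_right₀ (by positivity),
    ← Real.exp_add, Real.exp_le_exp]
  constructor <;> intro h <;> linarith

end Gaussian

theorem stmt_13_general (d : ℕ) (S : Matrix (Fin d) (Fin d) ℝ) (hS : S.PosDef) :
    ∀ A : Set (Fin d → ℝ), MeasurableSet A →
      |(gaussCov d 1 A).toReal - (gaussCov d S A).toReal|
        ≤ (gaussCov d 1 {x | Real.log S.det
              ≤ ∑ i, ((hS.posSemidef.sqrt *ᵥ x) i) ^ 2 - ∑ i, (x i) ^ 2}).toReal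
          - (gaussCov d 1 {x | Real.log S.det
              ≤ ∑ i, (x i) ^ 2 - ∑ i, ((hS.inv.posSemidef.sqrt *ᵥ x) i) ^ 2}).toReal := by
  intro A hA
  set T := hS.posSemidef.sqrt
  set R := hS.inv.posSemidef.sqrt
  set B : Set (Fin d → ℝ) := {x | Real.log S.det ≤ ∑ i, (x i) ^ 2 - ∑ i, ((R *ᵥ x) i) ^ 2}
  have hRS : Rᵀ * R = S⁻¹ := hS.inv.posSemidef.transpose_sqrt_mul_sqrt
  have hmap : (gaussCov d 1).map (T *ᵥ ·) = gaussCov d S := map_sqrt_mulVec_gaussCov_one hS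
  have hTmeas : Measurable (T *ᵥ · : (Fin d → ℝ) → Fin d → ℝ) := by fun_prop
  have hB : MeasurableSet B := measurableSet_le measurable_const (by fun_prop)
  have hRT (x : Fin d → ℝ) : ∑ i, (R *ᵥ (T *ᵥ x)) i ^ 2 = ∑ i, x i ^ 2 := by
    rw [sum_sq_eq_dotProduct_self, sum_sq_eq_dotProduct_self, mulVec_dotProduct_mulVec, hRS,
      ← hS.posSemidef.sqrt_mul_transpose_sqrt,
      mulVec_dotProduct_inv_mul_transpose_mulVec hS.isUnit_det_sqrt]
  have : IsFiniteMeasure (gaussCov d S) := hmap ▸ inferInstance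
  have huniv : gaussCov d 1 Set.univ = gaussCov d S Set.univ := by
    rw [← hmap, Measure.map_apply hTmeas MeasurableSet.univ, Set.preimage_univ]
  have hQB : gaussCov d S B
      = gaussCov d 1 {x | Real.log S.det ≤ ∑ i, ((T *ᵥ x) i) ^ 2 - ∑ i, (x i) ^ 2} := by
    rw [← hmap, Measure.map_apply hTmeas hB]
    simp only [B, Set.preimage_ofPred_eq, hRT]
  have hPQ : (gaussCov d 1).restrict B ≤ (gaussCov d S).restrict B :=
    restrict_withDensity_le_of_le hB fun x hx =>
      ENNReal.ofReal_le_ofReal ((gaussDensity_one_le_iff hS hRS x).2 hx)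
  have hQP : (gaussCov d S).restrict Bᶜ ≤ (gaussCov d 1).restrict Bᶜ :=
    restrict_withDensity_le_of_le hB.compl fun x hx =>
      ENNReal.ofReal_le_ofReal (le_of_not_ge fun h => hx ((gaussDensity_one_le_iff hS hRS x).1 h))
  have hTV := abs_measureReal_sub_le_of_restrict_le huniv hA hB hPQ hQP
  simp only [measureReal_def] at hTV
  rwa [hQB] at hTV

/-- Bound on the total variation distance between `N(0, Id)` and `N(0, Σ)`
used in the proof of the Bernstein–von Mises theorem: with `U ~ N(0, Id)`,
`‖N(0,Id) - N(0,Σ)‖_TV ≤ P(‖Σ^{1/2}U‖² - ‖U‖² ≥ log det Σ)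
  - P(‖U‖² - ‖Σ^{-1/2}U‖² ≥ log det Σ)`. -/
theorem stmt_13 (d : ℕ) (hd : 1 ≤ d) (S : Matrix (Fin d) (Fin d) ℝ) (hS : S.PosDef) :
    ∀ A : Set (Fin d → ℝ), MeasurableSet A →
      |(gaussCov d 1 A).toReal - (gaussCov d S A).toReal|
        ≤ (gaussCov d 1 {x | Real.log S.det
              ≤ ∑ i, ((hS.posSemidef.sqrt *ᵥ x) i) ^ 2 - ∑ i, (x i) ^ 2}).toReal
          - (gaussCov d 1 {x | Real.log S.det
              ≤ ∑ i, (x i) ^ 2 - ∑ i, ((hS.inv.posSemidef.sqrt *ᵥ x) i) ^ 2}).toReal :=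
  stmt_13_general d S hS
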